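/- arXiv:1312.4883 — 4 statements merged into one kernel-verified Lean document; each statement's English description precedes it below -/
import Mathlib

section
/- Let A ∈ ℝ^{n×n} be invertible, B ∈ ℝ^{n×p}, and let Y ∈ ℝ^{n×r} have full column rank r. Define M₁ = Yᵀ Y, A₁ = A Aᵀ + B Bᵀ Y Yᵀ Y Yᵀ B Bᵀ, and M₂ = Yᵀ A Aᵀ Y + Yᵀ B Bᵀ Y Yᵀ Y Yᵀ B Bᵀ Y. Then the map ḡ(ξ, ζ) = Trace(ξᵀ A₁ ζ M₁) + Trace(ξᵀ ζ M₂) on ℝ^{n×r} × ℝ^{n×r} is a real inner product: it is bilinear, symmetric (ḡ(ξ, ζ) = ḡ(ζ, ξ)), and positive definite (ḡ(ξ, ξ) > 0 for every ξ ≠ 0). -/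
/-!
`ḡ` is the sum of two trace forms `(ξ, ζ) ↦ tr (ξᵀ P ζ M)`, with `(P, M) = (A₁, M₁)` and
`(P, M) = (1, M₂)`, where `M₂ = Yᵀ A₁ Y`. Such a form is bilinear, symmetric when `P` and `M`
are, and its quadratic form is `vec ξ ↦ vec ξᵀ (Mᵀ ⊗ P) vec ξ`, hence positive (semi)definite
when `P` and `M` are, since Kronecker products preserve positivity. Finally
`A₁ = A Aᵀ + Cᵀ C` with `C = Y Yᵀ B Bᵀ` is positive definite because `A` is invertible,
`M₁ = Yᵀ Y` is positive definite because `Y` has full column rank, and `M₂` is positive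
semidefinite.
-/

open Matrix

/-- The proposed metric `ḡ_Y(ξ, ζ) = Trace(ξᵀ A₁ ζ M₁) + Trace(ξᵀ ζ M₂)`. -/
noncomputable def gbar {n p r : ℕ} (A : Matrix (Fin n) (Fin n) ℝ)
    (B : Matrix (Fin n) (Fin p) ℝ) (Y : Matrix (Fin n) (Fin r) ℝ)
    (ξ ζ : Matrix (Fin n) (Fin r) ℝ) : ℝ :=
  Matrix.trace (ξᵀ * (A * Aᵀ + B * Bᵀ * Y * Yᵀ * Y * Yᵀ * B * Bᵀ) * ζ * (Yᵀ * Y)) +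
  Matrix.trace (ξᵀ * ζ * (Yᵀ * A * Aᵀ * Y + Yᵀ * B * Bᵀ * Y * Yᵀ * Y * Yᵀ * B * Bᵀ * Y))

open scoped Kronecker

namespace Matrix

variable {m n R : Type*} [Fintype n]

theorem mulVec_injective_of_rank_eq_card [Field R] {Y : Matrix m n R}
    (hY : Y.rank = Fintype.card n) : Function.Injective Y.mulVec := by
  have hker := LinearMap.finrank_range_add_finrank_ker Y.mulVecLin
  rw [← Matrix.rank, hY, Module.finrank_fintype_fun_eq_card, add_eq_left,
    Submodule.finrank_eq_zero, LinearMap.ker_eq_bot] at hker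
  exact hker

variable [Fintype m]

theorem posDef_transpose_mul_self_of_rank_eq_card {Y : Matrix m n ℝ}
    (hY : Y.rank = Fintype.card n) : (Yᵀ * Y).PosDef := by
  simpa only [conjTranspose_eq_transpose_of_trivial] using
    PosDef.conjTranspose_mul_self Y (mulVec_injective_of_rank_eq_card hY)

section CommSemiring

variable [CommSemiring R]

def weightedTraceForm (P : Matrix m m R) (M : Matrix n n R) :
    LinearMap.BilinForm R (Matrix m n R) :=
  LinearMap.mk₂ R (fun ξ ζ => trace (ξᵀ * P * ζ * M))
    (fun _ _ _ => by simp only [transpose_add, Matrix.add_mul, trace_add])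
    (fun _ _ _ => by simp only [transpose_smul, Matrix.smul_mul, trace_smul])
    (fun _ _ _ => by simp only [Matrix.mul_add, Matrix.add_mul, trace_add])
    (fun _ _ _ => by simp only [Matrix.mul_smul, Matrix.smul_mul, trace_smul])

@[simp]
theorem weightedTraceForm_apply (P : Matrix m m R) (M : Matrix n n R) (ξ ζ : Matrix m n R) :
    weightedTraceForm P M ξ ζ = trace (ξᵀ * P * ζ * M) :=
  rfl

theorem isSymm_weightedTraceForm {P : Matrix m m R} {M : Matrix n n R} (hP : P.IsSymm)
    (hM : M.IsSymm) : (weightedTraceForm P M).IsSymm := by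
  refine ⟨fun ξ ζ => ?_⟩
  rw [weightedTraceForm_apply, weightedTraceForm_apply, ← trace_transpose]
  simp only [transpose_mul, transpose_transpose, hP.eq, hM.eq]
  rw [trace_mul_comm]
  simp only [Matrix.mul_assoc]

theorem weightedTraceForm_self_eq_dotProduct_kronecker_mulVec (P : Matrix m m R)
    (M : Matrix n n R) (ξ : Matrix m n R) :
    weightedTraceForm P M ξ ξ = vec ξ ⬝ᵥ ((Mᵀ ⊗ₖ P) *ᵥ vec ξ) := by
  rw [kronecker_mulVec_vec, transpose_transpose, vec_dotProduct_vec, weightedTraceForm_apply,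
    Matrix.mul_assoc, Matrix.mul_assoc, Matrix.mul_assoc]

end CommSemiring

variable {P : Matrix m m ℝ} {M : Matrix n n ℝ}

theorem weightedTraceForm_self_nonneg (hP : P.PosSemidef) (hM : M.PosSemidef)
    (ξ : Matrix m n ℝ) : 0 ≤ weightedTraceForm P M ξ ξ := by
  rw [weightedTraceForm_self_eq_dotProduct_kronecker_mulVec]
  simpa only [star_trivial] using (hM.transpose.kronecker hP).dotProduct_mulVec_nonneg (vec ξ)

theorem weightedTraceForm_self_pos (hP : P.PosDef) (hM : M.PosDef) {ξ : Matrix m n ℝ}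
    (hξ : ξ ≠ 0) : 0 < weightedTraceForm P M ξ ξ := by
  rw [weightedTraceForm_self_eq_dotProduct_kronecker_mulVec]
  simpa only [star_trivial] using
    (hM.transpose.kronecker hP).dotProduct_mulVec_pos (vec_eq_zero_iff.not.mpr hξ)

end Matrix

section gbar

variable {n p r : ℕ} (A : Matrix (Fin n) (Fin n) ℝ) (B : Matrix (Fin n) (Fin p) ℝ)
  (Y : Matrix (Fin n) (Fin r) ℝ)

/-- The matrix `A₁`. -/
def gbarWeight : Matrix (Fin n) (Fin n) ℝ :=
  A * Aᵀ + B * Bᵀ * Y * Yᵀ * Y * Yᵀ * B * Bᵀ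

theorem gbarWeight_eq_add_transpose_mul_self :
    gbarWeight A B Y = A * Aᵀ + (Y * Yᵀ * B * Bᵀ)ᵀ * (Y * Yᵀ * B * Bᵀ) := by
  simp only [gbarWeight, transpose_mul, transpose_transpose, Matrix.mul_assoc]

def gbarForm : LinearMap.BilinForm ℝ (Matrix (Fin n) (Fin r) ℝ) :=
  weightedTraceForm (gbarWeight A B Y) (Yᵀ * Y) +
    weightedTraceForm 1 (Yᵀ * gbarWeight A B Y * Y)

theorem gbar_eq_gbarForm (ξ ζ : Matrix (Fin n) (Fin r) ℝ) :
    gbar A B Y ξ ζ = gbarForm A B Y ξ ζ := by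
  simp only [gbar, gbarForm, gbarWeight, LinearMap.add_apply, weightedTraceForm_apply,
    Matrix.mul_one, Matrix.mul_add, Matrix.add_mul, Matrix.mul_assoc]

theorem isSymm_gbarWeight : (gbarWeight A B Y).IsSymm := by
  rw [gbarWeight_eq_add_transpose_mul_self]
  exact (isSymm_mul_transpose_self A).add (isSymm_transpose_mul_self _)

theorem isSymm_gbarForm : (gbarForm A B Y).IsSymm := by
  have hM₁ : (Yᵀ * Y).IsSymm := by
    simp only [IsSymm, transpose_mul, transpose_transpose]
  have hM₂ : (Yᵀ * gbarWeight A B Y * Y).IsSymm := by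
    simp only [IsSymm, transpose_mul, transpose_transpose, (isSymm_gbarWeight A B Y).eq,
      Matrix.mul_assoc]
  exact (isSymm_weightedTraceForm (isSymm_gbarWeight A B Y) hM₁).add
    (isSymm_weightedTraceForm isSymm_one hM₂)

variable {A}

theorem posDef_gbarWeight (hA : IsUnit A) : (gbarWeight A B Y).PosDef := by
  have hAAt := PosDef.mul_conjTranspose_self A (vecMul_injective_iff_isUnit.mpr hA)
  have hCtC := posSemidef_conjTranspose_mul_self (Y * Yᵀ * B * Bᵀ)
  rw [conjTranspose_eq_transpose_of_trivial] at hAAt hCtC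
  rw [gbarWeight_eq_add_transpose_mul_self]
  exact hAAt.add_posSemidef hCtC

theorem gbarForm_self_pos (hA : IsUnit A) (hY : Y.rank = r) {ξ : Matrix (Fin n) (Fin r) ℝ}
    (hξ : ξ ≠ 0) : 0 < gbarForm A B Y ξ ξ := by
  have hA₁ := posDef_gbarWeight B Y hA
  have hM₁ := posDef_transpose_mul_self_of_rank_eq_card (hY.trans (Fintype.card_fin r).symm)
  have hM₂ := hA₁.posSemidef.conjTranspose_mul_mul_same Y
  rw [conjTranspose_eq_transpose_of_trivial] at hM₂
  exact add_pos_of_pos_of_nonneg (weightedTraceForm_self_pos hA₁ hM₁ hξ)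
    (weightedTraceForm_self_nonneg PosSemidef.one hM₂ ξ)

end gbar

/-- For invertible `A` and full column rank `Y`, the map `ḡ` is a real inner product on
`ℝ^{n×r}`: bilinear, symmetric, and positive definite. -/
theorem stmt_4 (n p r : ℕ) (A : Matrix (Fin n) (Fin n) ℝ) (hA : IsUnit A)
    (B : Matrix (Fin n) (Fin p) ℝ) (Y : Matrix (Fin n) (Fin r) ℝ) (hY : Y.rank = r) :
    (∀ ξ ξ' ζ : Matrix (Fin n) (Fin r) ℝ,
        gbar A B Y (ξ + ξ') ζ = gbar A B Y ξ ζ + gbar A B Y ξ' ζ) ∧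
    (∀ (c : ℝ) (ξ ζ : Matrix (Fin n) (Fin r) ℝ),
        gbar A B Y (c • ξ) ζ = c * gbar A B Y ξ ζ) ∧
    (∀ ξ ζ ζ' : Matrix (Fin n) (Fin r) ℝ,
        gbar A B Y ξ (ζ + ζ') = gbar A B Y ξ ζ + gbar A B Y ξ ζ') ∧
    (∀ (c : ℝ) (ξ ζ : Matrix (Fin n) (Fin r) ℝ),
        gbar A B Y ξ (c • ζ) = c * gbar A B Y ξ ζ) ∧
    (∀ ξ ζ : Matrix (Fin n) (Fin r) ℝ, gbar A B Y ξ ζ = gbar A B Y ζ ξ) ∧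
    (∀ ξ : Matrix (Fin n) (Fin r) ℝ, ξ ≠ 0 → 0 < gbar A B Y ξ ξ) := by
  simp only [gbar_eq_gbarForm]
  exact ⟨fun ξ ξ' ζ => LinearMap.map_add₂ _ ξ ξ' ζ, fun c ξ ζ => LinearMap.map_smul₂ _ c ξ ζ,
    fun ξ ζ ζ' => map_add _ ζ ζ', fun c ξ ζ => map_smul _ c ζ, (isSymm_gbarForm A B Y).eq,
    fun ξ hξ => gbarForm_self_pos B Y hA hY hξ⟩
end

section
/- The proposed metric is invariant under the group action of O(r): for any A ∈ ℝ^{n×n}, B ∈ ℝ^{n×p}, Y ∈ ℝ^{n×r}, any tangent vectors ξ, ζ ∈ ℝ^{n×r}, and any orthogonal r×r matrix O, one has ḡ_{YO}(ξ O, ζ O) = ḡ_Y(ξ, ζ), where ḡ_Y(ξ, ζ) = Trace(ξᵀ A₁(Y) ζ M₁(Y)) + Trace(ξᵀ ζ M₂(Y)) with M₁(Y) = Yᵀ Y, A₁(Y) = A Aᵀ + B Bᵀ Y Yᵀ Y Yᵀ B Bᵀ, and M₂(Y) = Yᵀ A Aᵀ Y + Yᵀ B Bᵀ Y Yᵀ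 Y Yᵀ B Bᵀ Y. -/
open Matrix

/-!
Since `M₂(Y) = Yᵀ A₁(Y) Y` and `A₁(Y)` depends on `Y` only through `Y Yᵀ`, replacing `Y` by
`Y O` leaves `A₁` unchanged and conjugates `M₁`, `M₂` and the matrices `ξᵀ A₁ ζ`, `ξᵀ ζ` by `O`;
the two traces are then invariant by cyclicity.
-/

section Orthogonal

variable {m n s R : Type*} [Fintype n] [CommRing R]

theorem mul_mul_transpose_of_mul_transpose_eq_one [Fintype s] [DecidableEq n]
    {O : Matrix n s R} (hO : O * Oᵀ = 1) (Y : Matrix m n R) : Y * O * (Y * O)ᵀ = Y * Yᵀ := by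
  rw [transpose_mul, Matrix.mul_assoc, ← Matrix.mul_assoc O, hO, Matrix.one_mul]

theorem mul_transpose_mul_mul [Fintype m] (X Z : Matrix m n R) (O : Matrix n s R) :
    (X * O)ᵀ * (Z * O) = Oᵀ * (Xᵀ * Z) * O := by
  simp only [transpose_mul, Matrix.mul_assoc]

theorem mul_transpose_mul_mul_mul [Fintype m] (X Z : Matrix m n R) (C : Matrix m m R)
    (O : Matrix n s R) : (X * O)ᵀ * C * (Z * O) = Oᵀ * (Xᵀ * C * Z) * O := by
  simp only [transpose_mul, Matrix.mul_assoc]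

theorem transpose_mul_mul_mul_transpose_mul_mul [Fintype s] [DecidableEq n]
    {O : Matrix n s R} (hO : O * Oᵀ = 1) (X Z : Matrix n n R) :
    Oᵀ * X * O * (Oᵀ * Z * O) = Oᵀ * (X * Z) * O := by
  simp only [Matrix.mul_assoc]
  rw [← Matrix.mul_assoc O, hO, Matrix.one_mul]

theorem trace_transpose_mul_mul_of_mul_transpose_eq_one [Fintype s] [DecidableEq n]
    {O : Matrix n s R} (hO : O * Oᵀ = 1) (X : Matrix n n R) : trace (Oᵀ * X * O) = trace X := by
  rw [trace_mul_comm, ← Matrix.mul_assoc, hO, Matrix.one_mul]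

end Orthogonal

def metricA₁ {n p r R : Type*} [Fintype n] [Fintype p] [Fintype r] [CommRing R]
    (A : Matrix n n R) (B : Matrix n p R) (Y : Matrix n r R) : Matrix n n R :=
  A * Aᵀ + B * Bᵀ * (Y * Yᵀ) * (Y * Yᵀ) * B * Bᵀ

theorem metricA₁_mul_of_mul_transpose_eq_one {n p r s R : Type*} [Fintype n] [Fintype p]
    [Fintype r] [Fintype s] [DecidableEq r] [CommRing R] (A : Matrix n n R) (B : Matrix n p R)
    (Y : Matrix n r R) {O : Matrix r s R} (hO : O * Oᵀ = 1) :
    metricA₁ A B (Y * O) = metricA₁ A B Y := by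
  simp only [metricA₁, mul_mul_transpose_of_mul_transpose_eq_one hO]

theorem gbar_eq_trace {n p r : ℕ} (A : Matrix (Fin n) (Fin n) ℝ)
    (B : Matrix (Fin n) (Fin p) ℝ) (Y ξ ζ : Matrix (Fin n) (Fin r) ℝ) :
    gbar A B Y ξ ζ = trace (ξᵀ * metricA₁ A B Y * ζ * (Yᵀ * Y)) +
      trace (ξᵀ * ζ * (Yᵀ * metricA₁ A B Y * Y)) := by
  simp only [gbar, metricA₁, Matrix.mul_add, Matrix.add_mul, Matrix.mul_assoc]

theorem stmt_5_general (n p r : ℕ) (A : Matrix (Fin n) (Fin n) ℝ)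
    (B : Matrix (Fin n) (Fin p) ℝ) (Y : Matrix (Fin n) (Fin r) ℝ)
    (ξ ζ : Matrix (Fin n) (Fin r) ℝ) (O : Matrix (Fin r) (Fin r) ℝ)
    (hO' : O * Oᵀ = 1) :
    gbar A B (Y * O) (ξ * O) (ζ * O) = gbar A B Y ξ ζ := by
  rw [gbar_eq_trace, gbar_eq_trace, metricA₁_mul_of_mul_transpose_eq_one A B Y hO',
    mul_transpose_mul_mul_mul, mul_transpose_mul_mul_mul, mul_transpose_mul_mul,
    mul_transpose_mul_mul, transpose_mul_mul_mul_transpose_mul_mul hO',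
    transpose_mul_mul_mul_transpose_mul_mul hO',
    trace_transpose_mul_mul_of_mul_transpose_eq_one hO',
    trace_transpose_mul_mul_of_mul_transpose_eq_one hO']

/-- The proposed metric is invariant under the right action of the orthogonal group `O(r)`. -/
theorem stmt_5 (n p r : ℕ) (A : Matrix (Fin n) (Fin n) ℝ)
    (B : Matrix (Fin n) (Fin p) ℝ) (Y : Matrix (Fin n) (Fin r) ℝ)
    (ξ ζ : Matrix (Fin n) (Fin r) ℝ) (O : Matrix (Fin r) (Fin r) ℝ)
    (hO : Oᵀ * O = 1) (hO' : O * Oᵀ = 1) :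
    gbar A B (Y * O) (ξ * O) (ζ * O) = gbar A B Y ξ ζ :=
  stmt_5_general n p r A B Y ξ ζ O hO'
end

section
/- Let A₁ ∈ ℝ^{n×n} be symmetric positive definite, M₁ ∈ ℝ^{r×r} be symmetric positive definite, and M₂ ∈ ℝ^{r×r} be symmetric positive semidefinite. Then for every Z ∈ ℝ^{n×r} the linear matrix equation A₁ ξ M₁ + ξ M₂ = Z has a unique solution ξ ∈ ℝ^{n×r}. -/
/-!
Since `ξ ↦ A₁ ξ M₁ + ξ M₂` is a linear endomorphism of a finite-dimensional space, it suffices to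
show that its kernel is trivial. Pairing `A₁ ξ M₁ + ξ M₂ = 0` with `ξ` under `⟨X, Y⟩ = tr (Xᵀ Y)`
and writing `M₁ = Bᵀ B` gives `tr ((ξ Bᵀ)ᵀ A₁ (ξ Bᵀ)) + tr (ξ M₂ ξᵀ) = 0`. Both terms are sums of
quadratic forms over columns, the second is nonnegative, and the first is positive unless
`ξ Bᵀ = 0`; so `ξ M₁ = 0`, and `ξ = 0` because `M₁` is invertible.
-/

open Matrix
open scoped MatrixOrder

namespace Matrix

variable {m n R : Type*} [Fintype m] [Fintype n]

theorem trace_transpose_mul_mul_eq_sum [CommSemiring R] (Y : Matrix m n R) (A : Matrix m m R) :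
    (Yᵀ * A * Y).trace = ∑ j, Yᵀ j ⬝ᵥ A *ᵥ Yᵀ j := by
  simp only [trace, diag, mul_apply', dotProduct_mulVec]
  rfl

section Ordered

variable [CommSemiring R] [PartialOrder R] [IsOrderedCancelAddMonoid R]

theorem trace_transpose_mul_mul_nonneg (Y : Matrix m n R) {A : Matrix m m R}
    (hA : ∀ v, 0 ≤ v ⬝ᵥ A *ᵥ v) : 0 ≤ (Yᵀ * A * Y).trace := by
  rw [trace_transpose_mul_mul_eq_sum]
  exact Finset.sum_nonneg fun j _ => hA _

theorem trace_transpose_mul_mul_pos {Y : Matrix m n R} {A : Matrix m m R}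
    (hA : ∀ v, v ≠ 0 → 0 < v ⬝ᵥ A *ᵥ v) (hY : Y ≠ 0) : 0 < (Yᵀ * A * Y).trace := by
  have hA' : ∀ v, 0 ≤ v ⬝ᵥ A *ᵥ v := fun v => by
    rcases eq_or_ne v 0 with rfl | hv
    · simp
    · exact (hA v hv).le
  obtain ⟨j, hj⟩ : ∃ j, Yᵀ j ≠ 0 := by
    by_contra! h
    exact hY (transpose_eq_zero.mp (funext h))
  rw [trace_transpose_mul_mul_eq_sum]
  exact Finset.sum_pos' (fun j _ => hA' _) ⟨j, Finset.mem_univ j, hA _ hj⟩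

end Ordered

theorem eq_zero_of_mul_mul_add_mul_eq_zero {A : Matrix m m ℝ} {M₁ M₂ : Matrix n n ℝ}
    (hA : ∀ v, v ≠ 0 → 0 < v ⬝ᵥ A *ᵥ v) (hM₁ : M₁.PosDef) (hM₂ : ∀ v, 0 ≤ v ⬝ᵥ M₂ *ᵥ v)
    {ξ : Matrix m n ℝ} (h : A * ξ * M₁ + ξ * M₂ = 0) : ξ = 0 := by
  classical
  obtain ⟨B, hB⟩ := CStarAlgebra.nonneg_iff_eq_star_mul_self.mp hM₁.posSemidef.nonneg
  rw [star_eq_conjTranspose, conjTranspose_eq_transpose_of_trivial] at hB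
  have hfirst : (ξᵀ * (A * ξ * M₁)).trace = ((ξ * Bᵀ)ᵀ * A * (ξ * Bᵀ)).trace := by
    rw [hB, transpose_mul, transpose_transpose]
    simp only [Matrix.mul_assoc]
    rw [trace_mul_comm B]
    simp only [Matrix.mul_assoc]
  have hsecond : (ξᵀ * (ξ * M₂)).trace = (ξᵀᵀ * M₂ * ξᵀ).trace := by
    rw [transpose_transpose, trace_mul_comm]
  have hsum : ((ξ * Bᵀ)ᵀ * A * (ξ * Bᵀ)).trace + (ξᵀᵀ * M₂ * ξᵀ).trace = 0 := by
    rw [← hfirst, ← hsecond, ← trace_add, ← Matrix.mul_add, h, Matrix.mul_zero, trace_zero]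
  have hξB : ξ * Bᵀ = 0 := by
    by_contra hne
    linarith [trace_transpose_mul_mul_pos hA hne, trace_transpose_mul_mul_nonneg ξᵀ hM₂]
  have hξM₁ : ξ * M₁ = 0 := by rw [hB, ← Matrix.mul_assoc, hξB, Matrix.zero_mul]
  have hdet : IsUnit M₁.det := (isUnit_iff_isUnit_det M₁).mp hM₁.isUnit
  calc ξ = ξ * M₁ * M₁⁻¹ := (mul_nonsing_inv_cancel_right M₁ ξ hdet).symm
    _ = 0 := by rw [hξM₁, Matrix.zero_mul]

variable (A : Matrix m m ℝ) (M₁ M₂ : Matrix n n ℝ)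

def sylvesterMap : Matrix m n ℝ →ₗ[ℝ] Matrix m n ℝ where
  toFun ξ := A * ξ * M₁ + ξ * M₂
  map_add' ξ η := by simp only [Matrix.mul_add, Matrix.add_mul]; abel
  map_smul' c ξ := by simp only [Matrix.mul_smul, Matrix.smul_mul, smul_add, RingHom.id_apply]

theorem sylvesterMap_bijective (hA : ∀ v, v ≠ 0 → 0 < v ⬝ᵥ A *ᵥ v) (hM₁ : M₁.PosDef)
    (hM₂ : ∀ v, 0 ≤ v ⬝ᵥ M₂ *ᵥ v) : Function.Bijective (sylvesterMap A M₁ M₂) := by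
  have hinj : Function.Injective (sylvesterMap A M₁ M₂) := by
    rw [← LinearMap.ker_eq_bot, LinearMap.ker_eq_bot']
    exact fun ξ hξ => eq_zero_of_mul_mul_add_mul_eq_zero hA hM₁ hM₂ hξ
  exact ⟨hinj, LinearMap.injective_iff_surjective.mp hinj⟩

end Matrix

theorem stmt_7_general (n r : ℕ) (A₁ : Matrix (Fin n) (Fin n) ℝ)
    (hA₁pd : ∀ v : Fin n → ℝ, v ≠ 0 → 0 < v ⬝ᵥ A₁.mulVec v)
    (M₁ : Matrix (Fin r) (Fin r) ℝ)
    (hM₁symm : M₁ = M₁ᵀ) (hM₁pd : ∀ v : Fin r → ℝ, v ≠ 0 → 0 < v ⬝ᵥ M₁.mulVec v)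
    (M₂ : Matrix (Fin r) (Fin r) ℝ)
    (hM₂psd : ∀ v : Fin r → ℝ, 0 ≤ v ⬝ᵥ M₂.mulVec v)
    (Z : Matrix (Fin n) (Fin r) ℝ) :
    ∃! ξ : Matrix (Fin n) (Fin r) ℝ, A₁ * ξ * M₁ + ξ * M₂ = Z := by
  have hM₁herm : M₁.IsHermitian := by
    rw [IsHermitian, conjTranspose_eq_transpose_of_trivial, ← hM₁symm]
  have hM₁posDef : M₁.PosDef :=
    .of_dotProduct_mulVec_pos hM₁herm fun v hv => by simpa using hM₁pd v hv
  exact (sylvesterMap_bijective A₁ M₁ M₂ hA₁pd hM₁posDef hM₂psd).existsUnique Z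

/-- For `A₁ ≻ 0`, `M₁ ≻ 0` and `M₂ ⪰ 0`, the linear matrix equation
`A₁ ξ M₁ + ξ M₂ = Z` has a unique solution `ξ ∈ ℝ^{n×r}` for every `Z`. -/
theorem stmt_7 (n r : ℕ) (A₁ : Matrix (Fin n) (Fin n) ℝ)
    (hA₁symm : A₁ = A₁ᵀ) (hA₁pd : ∀ v : Fin n → ℝ, v ≠ 0 → 0 < v ⬝ᵥ A₁.mulVec v)
    (M₁ : Matrix (Fin r) (Fin r) ℝ)
    (hM₁symm : M₁ = M₁ᵀ) (hM₁pd : ∀ v : Fin r → ℝ, v ≠ 0 → 0 < v ⬝ᵥ M₁.mulVec v)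
    (M₂ : Matrix (Fin r) (Fin r) ℝ)
    (hM₂symm : M₂ = M₂ᵀ) (hM₂psd : ∀ v : Fin r → ℝ, 0 ≤ v ⬝ᵥ M₂.mulVec v)
    (Z : Matrix (Fin n) (Fin r) ℝ) :
    ∃! ξ : Matrix (Fin n) (Fin r) ℝ, A₁ * ξ * M₁ + ξ * M₂ = Z :=
  stmt_7_general n r A₁ hA₁pd M₁ hM₁symm hM₁pd M₂ hM₂psd Z
end

section
/- Let A ∈ ℝ^{n×n}, B ∈ ℝ^{n×p}, C ∈ ℝ^{s×n}, and define φ̄ : ℝ^{n×r} → ℝ by φ̄(Y) = (1/4) ‖Aᵀ Y Yᵀ + Y Yᵀ A + Y Yᵀ B Bᵀ Y Yᵀ − Cᵀ C‖_F². Then φ̄ is differentiable at every Y ∈ ℝ^{n×r}, and its Euclidean gradient is Grad_Y φ̄ = (A R + R Aᵀ + B Bᵀ X R + R X B Bᵀ) Y, where X = Y Yᵀ and R = Aᵀ X + X A + X B Bᵀ X − Cᵀ C; i.e., the derivative of φ̄ at Y in any direction Z ∈ ℝ^{n×r} equals Trace(((A R + R Aᵀ + B Bᵀ X R + R X B Bᵀ)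 Y)ᵀ Z). -/
/-!
Differentiate `t ↦ φ̄(Y + t Z)` at `0` by the product rule: `X(t) = (Y + tZ)(Y + tZ)ᵀ` moves with
velocity `D = Z Yᵀ + Y Zᵀ`, the residual with velocity `L_X(D) = Aᵀ D + D A + D B Bᵀ X + X B Bᵀ D`,
and `(1/4) ‖R‖_F²` with velocity `(1/2) tr(R L_X(D))`, as `R` is symmetric. Cycling the trace moves
every factor off `D`, giving `tr(R L_X(D)) = tr(G D)` with `G = A R + R Aᵀ + B Bᵀ X R + R X B Bᵀ`,
and since `G` is symmetric, `tr(G (Z Yᵀ + Y Zᵀ)) = 2 tr((G Y)ᵀ Z)`.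
-/

open Matrix

attribute [local instance] Matrix.normedAddCommGroup Matrix.normedSpace

/-- The residual `R(X) = Aᵀ X + X A + X B Bᵀ X − Cᵀ C`. -/
noncomputable def resid {n p s : ℕ} (A : Matrix (Fin n) (Fin n) ℝ)
    (B : Matrix (Fin n) (Fin p) ℝ) (C : Matrix (Fin s) (Fin n) ℝ)
    (X : Matrix (Fin n) (Fin n) ℝ) : Matrix (Fin n) (Fin n) ℝ :=
  Aᵀ * X + X * A + X * B * Bᵀ * X - Cᵀ * C

/-- The fixed-rank cost on factors `φ̄(Y) = (1/4) ‖R(Y Yᵀ)‖_F²`. -/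
noncomputable def phibar {n p s r : ℕ} (A : Matrix (Fin n) (Fin n) ℝ)
    (B : Matrix (Fin n) (Fin p) ℝ) (C : Matrix (Fin s) (Fin n) ℝ)
    (Y : Matrix (Fin n) (Fin r) ℝ) : ℝ :=
  (1 / 4) * Matrix.trace ((resid A B C (Y * Yᵀ))ᵀ * resid A B C (Y * Yᵀ))

namespace Matrix

section Calculus

variable {𝕜 : Type*} [NontriviallyNormedField 𝕜] [CompleteSpace 𝕜]
  {l m n : Type*} [Fintype l] [Fintype m] [Fintype n]

noncomputable def mulCLM : Matrix l m 𝕜 →L[𝕜] Matrix m n 𝕜 →L[𝕜] Matrix l n 𝕜 :=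
  (mulLinearMap 𝕜).toContinuousBilinearMap

noncomputable def transposeCLM : Matrix m n 𝕜 →L[𝕜] Matrix n m 𝕜 :=
  (transposeLinearEquiv m n 𝕜 𝕜).toLinearMap.toContinuousLinearMap

noncomputable def traceCLM : Matrix n n 𝕜 →L[𝕜] 𝕜 :=
  (traceLinearMap n 𝕜 𝕜).toContinuousLinearMap

/- The library lemmas produce these statements for the normed topology on `Matrix`, which agrees
with the default one only up to unfolding; elaborating them without expected type (`(e :)`) leaves
the comparison to the final definitional-equality check. -/

theorem _root_.HasDerivAt.matrix_mul {u : 𝕜 → Matrix l m 𝕜} {v : 𝕜 → Matrix m n 𝕜}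
    {u' : Matrix l m 𝕜} {v' : Matrix m n 𝕜} {t : 𝕜} (hu : HasDerivAt u u' t)
    (hv : HasDerivAt v v' t) : HasDerivAt (fun t => u t * v t) (u' * v t + u t * v') t :=
  ((mulCLM.hasDerivAt_of_bilinear (fun _ => hu) (fun _ => hv)).congr_deriv (add_comm _ _) :)

theorem _root_.HasDerivAt.matrix_transpose {u : 𝕜 → Matrix m n 𝕜} {u' : Matrix m n 𝕜} {t : 𝕜}
    (hu : HasDerivAt u u' t) : HasDerivAt (fun t => (u t)ᵀ) u'ᵀ t :=
  (transposeCLM.hasFDerivAt.comp_hasDerivAt t hu :)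

theorem _root_.HasDerivAt.matrix_trace {u : 𝕜 → Matrix n n 𝕜} {u' : Matrix n n 𝕜} {t : 𝕜}
    (hu : HasDerivAt u u' t) : HasDerivAt (fun t => (u t).trace) u'.trace t :=
  (traceCLM.hasFDerivAt.comp_hasDerivAt t hu :)

theorem _root_.HasDerivAt.matrix_trace_transpose_mul_self {u : 𝕜 → Matrix m n 𝕜}
    {u' : Matrix m n 𝕜} {t : 𝕜} (hu : HasDerivAt u u' t) :
    HasDerivAt (fun t => ((u t)ᵀ * u t).trace) (2 * ((u t)ᵀ * u').trace) t := by
  have h := (hu.matrix_transpose.matrix_mul hu).matrix_trace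
  rwa [trace_add, ← trace_transpose (u'ᵀ * u t), transpose_mul, transpose_transpose,
    ← two_mul] at h

theorem hasDerivAt_mul_transpose_line (Y Z : Matrix m n 𝕜) :
    HasDerivAt (fun t : 𝕜 => (Y + t • Z) * (Y + t • Z)ᵀ) (Z * Yᵀ + Y * Zᵀ) 0 := by
  have hline : HasDerivAt (fun t : 𝕜 => Y + t • Z) Z 0 :=
    (((hasDerivAt_id' (0 : 𝕜)).smul_const Z).const_add Y).congr_deriv (one_smul 𝕜 Z)
  have h := hline.matrix_mul hline.matrix_transpose
  rwa [zero_smul, add_zero] at h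

variable {E : Type*} [NormedAddCommGroup E] [NormedSpace 𝕜 E]

@[fun_prop]
theorem _root_.Differentiable.matrix_mul {f : E → Matrix l m 𝕜} {g : E → Matrix m n 𝕜}
    (hf : Differentiable 𝕜 f) (hg : Differentiable 𝕜 g) :
    Differentiable 𝕜 (fun x => f x * g x) :=
  (mulCLM.isBoundedBilinearMap.differentiable.comp (hf.prodMk hg) :)

@[fun_prop]
theorem _root_.Differentiable.matrix_transpose {f : E → Matrix m n 𝕜}
    (hf : Differentiable 𝕜 f) : Differentiable 𝕜 (fun x => (f x)ᵀ) :=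
  (transposeCLM.differentiable.comp hf :)

@[fun_prop]
theorem _root_.Differentiable.matrix_trace {f : E → Matrix n n 𝕜} (hf : Differentiable 𝕜 f) :
    Differentiable 𝕜 (fun x => (f x).trace) :=
  (traceCLM.differentiable.comp hf :)

end Calculus

theorem trace_mul_add_transpose_of_isSymm {α : Type*} [CommRing α] {n r : Type*} [Fintype n]
    [Fintype r] {G : Matrix n n α} (hG : G.IsSymm) (Y Z : Matrix n r α) :
    trace (G * (Z * Yᵀ + Y * Zᵀ)) = 2 * trace ((G * Y)ᵀ * Z) := by
  have h₁ : trace (G * (Z * Yᵀ)) = trace ((G * Y)ᵀ * Z) := by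
    rw [← Matrix.mul_assoc, trace_mul_comm, transpose_mul, hG.eq, Matrix.mul_assoc]
  have h₂ : trace (G * (Y * Zᵀ)) = trace ((G * Y)ᵀ * Z) := by
    rw [← Matrix.mul_assoc, trace_mul_comm, ← trace_transpose, transpose_mul, transpose_transpose]
  rw [Matrix.mul_add, trace_add, h₁, h₂, two_mul]

end Matrix

section Riccati

variable {n p s : ℕ} (A : Matrix (Fin n) (Fin n) ℝ) (B : Matrix (Fin n) (Fin p) ℝ)
  (C : Matrix (Fin s) (Fin n) ℝ)

noncomputable def residDeriv (X D : Matrix (Fin n) (Fin n) ℝ) : Matrix (Fin n) (Fin n) ℝ :=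
  Aᵀ * D + D * A + D * B * Bᵀ * X + X * B * Bᵀ * D

noncomputable def residDerivAdjoint (X R : Matrix (Fin n) (Fin n) ℝ) : Matrix (Fin n) (Fin n) ℝ :=
  A * R + R * Aᵀ + B * Bᵀ * X * R + R * X * B * Bᵀ

theorem HasDerivAt.resid {X : ℝ → Matrix (Fin n) (Fin n) ℝ} {X' : Matrix (Fin n) (Fin n) ℝ}
    {t : ℝ} (hX : HasDerivAt X X' t) :
    HasDerivAt (fun t => resid A B C (X t)) (residDeriv A B (X t) X') t := by
  have h := ((((hasDerivAt_const t Aᵀ).matrix_mul hX).add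
    (hX.matrix_mul (hasDerivAt_const t A))).add
    (((hX.matrix_mul (hasDerivAt_const t B)).matrix_mul (hasDerivAt_const t Bᵀ)).matrix_mul
      hX)).sub_const (Cᵀ * C)
  exact h.congr_deriv (by simp [residDeriv, Matrix.mul_assoc, add_assoc])

theorem resid_isSymm {X : Matrix (Fin n) (Fin n) ℝ} (hX : X.IsSymm) :
    (resid A B C X).IsSymm := by
  simp only [IsSymm, resid, transpose_sub, transpose_add, transpose_mul, transpose_transpose,
    hX.eq, Matrix.mul_assoc]
  abel

theorem residDerivAdjoint_isSymm {X R : Matrix (Fin n) (Fin n) ℝ} (hX : X.IsSymm)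
    (hR : R.IsSymm) : (residDerivAdjoint A B X R).IsSymm := by
  simp only [IsSymm, residDerivAdjoint, transpose_add, transpose_mul, transpose_transpose,
    hX.eq, hR.eq, Matrix.mul_assoc]
  abel

theorem trace_mul_residDeriv (X R D : Matrix (Fin n) (Fin n) ℝ) :
    trace (R * residDeriv A B X D) = trace (residDerivAdjoint A B X R * D) := by
  have h₁ : trace (R * (D * A)) = trace (A * R * D) := by
    rw [trace_mul_comm, Matrix.mul_assoc, trace_mul_comm]
  have h₂ : trace (R * (D * B * Bᵀ * X)) = trace (B * Bᵀ * X * R * D) := by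
    rw [trace_mul_comm, Matrix.mul_assoc, Matrix.mul_assoc, Matrix.mul_assoc, trace_mul_comm]
    simp only [Matrix.mul_assoc]
  simp only [residDeriv, residDerivAdjoint, Matrix.mul_add, Matrix.add_mul, trace_add, h₁, h₂]
  simp only [Matrix.mul_assoc]
  ring

theorem hasDerivAt_phibar_line {r : ℕ} (Y Z : Matrix (Fin n) (Fin r) ℝ) :
    HasDerivAt (fun t : ℝ => phibar A B C (Y + t • Z))
      (trace ((residDerivAdjoint A B (Y * Yᵀ) (resid A B C (Y * Yᵀ)) * Y)ᵀ * Z)) 0 := by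
  have hX : (Y * Yᵀ).IsSymm := by
    rw [IsSymm, transpose_mul, transpose_transpose]
  have hR := resid_isSymm A B C hX
  have h := (((hasDerivAt_mul_transpose_line Y Z).resid A B C).matrix_trace_transpose_mul_self
    ).const_mul (1 / 4 : ℝ)
  rw [zero_smul, add_zero, hR.eq, trace_mul_residDeriv,
    trace_mul_add_transpose_of_isSymm (residDerivAdjoint_isSymm A B hX hR)] at h
  exact h.congr_deriv (by ring)

end Riccati

/-- `φ̄` is differentiable everywhere, and its Euclidean gradient at `Y` is
`(A R + R Aᵀ + B Bᵀ X R + R X B Bᵀ) Y` with `X = Y Yᵀ` and `R = R(X)`: the derivative in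
direction `Z` equals the Frobenius inner product of the gradient with `Z`. -/
theorem stmt_14 (n p s r : ℕ) (A : Matrix (Fin n) (Fin n) ℝ)
    (B : Matrix (Fin n) (Fin p) ℝ) (C : Matrix (Fin s) (Fin n) ℝ) :
    Differentiable ℝ (phibar A B C (r := r)) ∧
    ∀ Y Z : Matrix (Fin n) (Fin r) ℝ,
      HasDerivAt (fun t : ℝ => phibar A B C (Y + t • Z))
        (Matrix.trace
          (((A * resid A B C (Y * Yᵀ) + resid A B C (Y * Yᵀ) * Aᵀ +
              B * Bᵀ * (Y * Yᵀ) * resid A B C (Y * Yᵀ) +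
              resid A B C (Y * Yᵀ) * (Y * Yᵀ) * B * Bᵀ) * Y)ᵀ * Z)) 0 := by
  refine ⟨?_, hasDerivAt_phibar_line A B C⟩
  unfold phibar resid
  fun_prop
end
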